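/- arXiv:1409.4847 — 3 statements merged into one kernel-verified Lean document; each statement's English description precedes it below -/
import Mathlib

section
/- For coprime p₊, p₋ ≥ 2 and integers 1 ≤ r, r' ≤ p₊-1, 1 ≤ s, s' ≤ p₋-1: h_{r,s} = h_{r',s'} if and only if (r', s') = (r, s) or (r', s') = (p₊ - r, p₋ - s). Consequently there are exactly (p₊-1)(p₋-1)/2 distinct values h_{r,s} in this range. -/
open Finset

/-!
`h_{r,s}` depends on `(r, s)` only through `(r p₋ - s p₊)²`. Two such squares agree iff
`r' p₋ - s' p₊ = ±(r p₋ - s p₊)`, i.e. `x p₋ = y p₊` with `(x, y) = (r' - r, s' - s)` or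
`(r + r' - p₊, s + s' - p₋)`; coprimality forces `p₊ ∣ x`, and `|x| < p₊` then gives `x = y = 0`.
So the fibres of `h` on the Kac table are the orbits of `(r, s) ↦ (p₊ - r, p₋ - s)`, an involution
without fixed points because `p₊` and `p₋` are not both even; hence every fibre has two elements.
-/

theorem IsCoprime.eq_zero_of_mul_eq_mul_of_abs_lt {a b x y : ℤ} (hab : IsCoprime a b)
    (h : x * b = y * a) (hx : |x| < a) : x = 0 ∧ y = 0 := by
  have hx0 : x = 0 :=
    Int.eq_zero_of_abs_lt_dvd (hab.dvd_of_dvd_mul_right ⟨y, by rw [h, mul_comm]⟩) hx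
  refine ⟨hx0, ?_⟩
  have ha : a ≠ 0 := by have := abs_nonneg x; omega
  simpa [hx0, ha] using h

theorem IsCoprime.not_two_dvd_and_two_dvd {a b : ℤ} (hab : IsCoprime a b) : ¬(2 ∣ a ∧ 2 ∣ b) := by
  rintro ⟨ha, hb⟩
  have := Int.isUnit_iff.mp (hab.isUnit_of_dvd' ha hb)
  omega

theorem Finset.card_eq_mul_card_image_of_card_fiber_eq {α β : Type*} [DecidableEq β]
    {s : Finset α} {f : α → β} {n : ℕ} (h : ∀ a ∈ s, #{b ∈ s | f b = f a} = n) :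
    #s = n * #(s.image f) := by
  rw [card_eq_sum_card_image f s, sum_const_nat, mul_comm]
  rintro _ hb
  obtain ⟨a, ha, rfl⟩ := mem_image.mp hb
  exact h a ha

theorem mul_sub_mul_sq_eq_sq_iff {pp pm r s r' s' : ℤ} (hcop : IsCoprime pp pm)
    (hr₁ : 1 ≤ r) (hr₂ : r ≤ pp - 1) (hr₁' : 1 ≤ r') (hr₂' : r' ≤ pp - 1) :
    (r * pm - s * pp) ^ 2 = (r' * pm - s' * pp) ^ 2 ↔
      (r' = r ∧ s' = s) ∨ (r' = pp - r ∧ s' = pm - s) := by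
  rw [sq_eq_sq_iff_eq_or_eq_neg]
  refine or_congr ⟨fun h => ?_, ?_⟩ ⟨fun h => ?_, ?_⟩
  · have := hcop.eq_zero_of_mul_eq_mul_of_abs_lt (x := r' - r) (y := s' - s)
      (by linear_combination -h) (abs_lt.mpr ⟨by omega, by omega⟩)
    omega
  · rintro ⟨rfl, rfl⟩; rfl
  · have := hcop.eq_zero_of_mul_eq_mul_of_abs_lt (x := r + r' - pp) (y := s + s' - pm)
      (by linear_combination h) (abs_lt.mpr ⟨by omega, by omega⟩)
    omega
  · rintro ⟨rfl, rfl⟩; ring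

/-- The conformal weight `h_{r,s}` of the minimal model with `pp = p₊`, `pm = p₋`. -/
def kacWeight (pp pm r s : ℤ) : ℚ :=
  (((r * pm - s * pp : ℤ) : ℚ) ^ 2 - ((pp - pm : ℤ) : ℚ) ^ 2) / (4 * pp * pm)

noncomputable def kacTable (pp pm : ℤ) : Finset (ℤ × ℤ) :=
  Icc 1 (pp - 1) ×ˢ Icc 1 (pm - 1)

section

variable {pp pm : ℤ}

theorem kacWeight_eq_kacWeight_iff_sq_eq (hpp : pp ≠ 0) (hpm : pm ≠ 0) {r s r' s' : ℤ} :
    kacWeight pp pm r s = kacWeight pp pm r' s' ↔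
      (r * pm - s * pp) ^ 2 = (r' * pm - s' * pp) ^ 2 := by
  have hden : (4 * pp * pm : ℚ) ≠ 0 := by simp [hpp, hpm]
  rw [kacWeight, kacWeight, div_left_inj' hden, sub_left_inj, ← Int.cast_pow, ← Int.cast_pow,
    Int.cast_inj]

theorem kacWeight_eq_kacWeight_iff (hpp : pp ≠ 0) (hpm : pm ≠ 0) (hcop : IsCoprime pp pm)
    {r s r' s' : ℤ} (hr₁ : 1 ≤ r) (hr₂ : r ≤ pp - 1) (hr₁' : 1 ≤ r') (hr₂' : r' ≤ pp - 1) :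
    kacWeight pp pm r s = kacWeight pp pm r' s' ↔
      (r' = r ∧ s' = s) ∨ (r' = pp - r ∧ s' = pm - s) := by
  rw [kacWeight_eq_kacWeight_iff_sq_eq hpp hpm, mul_sub_mul_sq_eq_sq_iff hcop hr₁ hr₂ hr₁' hr₂']

theorem mem_kacTable {x : ℤ × ℤ} :
    x ∈ kacTable pp pm ↔ (1 ≤ x.1 ∧ x.1 ≤ pp - 1) ∧ 1 ≤ x.2 ∧ x.2 ≤ pm - 1 := by
  simp only [kacTable, mem_product, mem_Icc]

theorem filter_kacWeight_eq (hpp : pp ≠ 0) (hpm : pm ≠ 0) (hcop : IsCoprime pp pm)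
    {x : ℤ × ℤ} (hx : x ∈ kacTable pp pm) :
    {y ∈ kacTable pp pm | kacWeight pp pm y.1 y.2 = kacWeight pp pm x.1 x.2} =
      {x, (pp - x.1, pm - x.2)} := by
  rw [mem_kacTable] at hx
  ext y
  simp only [mem_filter, mem_kacTable, mem_insert, mem_singleton, Prod.ext_iff]
  constructor
  · rintro ⟨⟨hy₁, -⟩, hxy⟩
    exact (kacWeight_eq_kacWeight_iff hpp hpm hcop hx.1.1 hx.1.2 hy₁.1 hy₁.2).mp hxy.symm
  · intro hy
    refine ⟨by omega, ((kacWeight_eq_kacWeight_iff hpp hpm hcop hx.1.1 hx.1.2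
      (by omega) (by omega)).mpr hy).symm⟩

theorem card_filter_kacWeight_eq (hpp : pp ≠ 0) (hpm : pm ≠ 0) (hcop : IsCoprime pp pm)
    {x : ℤ × ℤ} (hx : x ∈ kacTable pp pm) :
    #{y ∈ kacTable pp pm | kacWeight pp pm y.1 y.2 = kacWeight pp pm x.1 x.2} = 2 := by
  rw [filter_kacWeight_eq hpp hpm hcop hx, card_pair]
  intro hfix
  simp only [Prod.ext_iff] at hfix
  exact hcop.not_two_dvd_and_two_dvd ⟨⟨x.1, by omega⟩, ⟨x.2, by omega⟩⟩

theorem card_kacTable (hpp : 1 ≤ pp) (hpm : 1 ≤ pm) :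
    (#(kacTable pp pm) : ℤ) = (pp - 1) * (pm - 1) := by
  rw [kacTable, card_product, Int.card_Icc, Int.card_Icc, Nat.cast_mul,
    Int.toNat_of_nonneg (by omega), Int.toNat_of_nonneg (by omega)]
  ring

end

/-- For coprime `p₊, p₋ ≥ 2` and `1 ≤ r, r' ≤ p₊-1`, `1 ≤ s, s' ≤ p₋-1`:
`h_{r,s} = h_{r',s'}` iff `(r',s') = (r,s)` or `(r',s') = (p₊-r, p₋-s)`;
consequently there are exactly `(p₊-1)(p₋-1)/2` distinct values `h_{r,s}`. -/
theorem stmt_6 (pp pm : ℤ) (hpp : 2 ≤ pp) (hpm : 2 ≤ pm) (hcop : IsCoprime pp pm) :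
    (∀ r s r' s' : ℤ, 1 ≤ r → r ≤ pp - 1 → 1 ≤ s → s ≤ pm - 1 →
      1 ≤ r' → r' ≤ pp - 1 → 1 ≤ s' → s' ≤ pm - 1 →
      ((((r * pm - s * pp : ℤ) : ℚ) ^ 2 - ((pp - pm : ℤ) : ℚ) ^ 2) / (4 * pp * pm)
          = (((r' * pm - s' * pp : ℤ) : ℚ) ^ 2 - ((pp - pm : ℤ) : ℚ) ^ 2) / (4 * pp * pm)
        ↔ ((r' = r ∧ s' = s) ∨ (r' = pp - r ∧ s' = pm - s)))) ∧
    ((Finset.Icc 1 (pp - 1) ×ˢ Finset.Icc 1 (pm - 1)).image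
        (fun rs : ℤ × ℤ =>
          (((rs.1 * pm - rs.2 * pp : ℤ) : ℚ) ^ 2 - ((pp - pm : ℤ) : ℚ) ^ 2) / (4 * pp * pm))).card
      = ((pp - 1) * (pm - 1) / 2).toNat := by
  have hpp0 : pp ≠ 0 := by omega
  have hpm0 : pm ≠ 0 := by omega
  refine ⟨fun r s r' s' hr₁ hr₂ _ _ hr₁' hr₂' _ _ =>
    kacWeight_eq_kacWeight_iff hpp0 hpm0 hcop hr₁ hr₂ hr₁' hr₂', ?_⟩
  have hfibres :
      #(kacTable pp pm) = 2 * #((kacTable pp pm).image fun x => kacWeight pp pm x.1 x.2) :=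
    card_eq_mul_card_image_of_card_fiber_eq fun _ hx => card_filter_kacWeight_eq hpp0 hpm0 hcop hx
  have hcard := card_kacTable (pp := pp) (pm := pm) (by omega) (by omega)
  change #((kacTable pp pm).image fun x => kacWeight pp pm x.1 x.2) = _
  omega
end

section
/- For coprime p₊, p₋ ≥ 2 and μ ∈ ℂ, with h(μ) = μ(μ - α₀)/2 and the notation above: ∏_{i=1}^{p₊-1} ∏_{j=1}^{p₋-1} (μ - α_{i,j}) = ∏_{(r,s)} 2(h(μ) - h_{r,s}), where (r,s) runs over pairs with 1 ≤ r ≤ p₊-1, 1 ≤ s ≤ p₋-1, rp₋ + sp₊ < p₊p₋; i.e., the (p₊-1)(p₋-1) linear factors pair up into (p₊-1)(p₋-1)/2 quadratic factors 2(h(μ) - h_{r,s}). -/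
/-!
Reflection `(r, s) ↦ (p₊ - r, p₋ - s)` sends `α_{r,s}` to `α₀ - α_{r,s}`, so the two linear
factors of a reflected pair multiply to `μ² - α₀μ + α_{r,s}(α₀ - α_{r,s}) = 2(h(μ) - h_{r,s})`.
It sends `N = rp₋ + sp₊` to `2p₊p₋ - N`, and `N ≠ p₊p₋` because `p₊ ∤ r`; hence every
reflection orbit meets `{N < p₊p₋}` exactly once.
-/

open Finset

theorem Finset.prod_eq_prod_filter_mul_comp {ι M : Type*} [CommMonoid M] (S : Finset ι)
    (P : ι → Prop) [DecidablePred P] (σ : ι → ι) (f : ι → M)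
    (hσ : ∀ x ∈ S, σ x ∈ S) (hσσ : ∀ x ∈ S, σ (σ x) = x) (hP : ∀ x ∈ S, P (σ x) ↔ ¬ P x) :
    ∏ x ∈ S, f x = ∏ x ∈ S.filter P, f x * f (σ x) := by
  rw [← prod_filter_mul_prod_filter_not S P, prod_mul_distrib]
  congr 1
  refine prod_nbij' σ σ ?_ ?_ ?_ ?_ ?_ <;> simp only [mem_filter] <;> intro x hx
  · exact ⟨hσ x hx.1, (hP x hx.1).2 hx.2⟩
  · exact ⟨hσ x hx.1, by rw [hP x hx.1]; exact not_not.2 hx.2⟩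
  · exact hσσ x hx.1
  · exact hσσ x hx.1
  · rw [hσσ x hx.1]

theorem Real.sqrt_div_eq_sqrt_mul_div {x : ℝ} (hx : 0 < x) (y : ℝ) :
    √(y / x) = √(x * y) / x := by
  rw [eq_div_iff hx.ne', ← Real.sqrt_sq hx.le, ← Real.sqrt_mul' _ (sq_nonneg x),
    Real.sqrt_sq hx.le]
  congr 1; field_simp

namespace KacTable

variable {a b : ℕ} {x : ℕ × ℕ}

theorem reflect_mem (hx : x ∈ Icc 1 (a - 1) ×ˢ Icc 1 (b - 1)) :
    (a - x.1, b - x.2) ∈ Icc 1 (a - 1) ×ˢ Icc 1 (b - 1) := by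
  simp only [mem_product, mem_Icc] at hx ⊢
  omega

theorem reflect_reflect (hx : x ∈ Icc 1 (a - 1) ×ˢ Icc 1 (b - 1)) :
    (a - (a - x.1), b - (b - x.2)) = x := by
  simp only [mem_product, mem_Icc] at hx
  ext <;> dsimp only <;> omega

theorem reflect_lt_iff (hab : Nat.Coprime a b) (hx : x ∈ Icc 1 (a - 1) ×ˢ Icc 1 (b - 1)) :
    (a - x.1) * b + (b - x.2) * a < a * b ↔ ¬ x.1 * b + x.2 * a < a * b := by
  simp only [mem_product, mem_Icc] at hx
  have hne : x.1 * b + x.2 * a ≠ b * a := hab.symm.mul_add_mul_ne_mul (by omega) (by omega)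
  have : x.1 * b ≤ a * b := Nat.mul_le_mul_right b (by omega)
  have : x.2 * a ≤ b * a := Nat.mul_le_mul_right a (by omega)
  rw [Nat.sub_mul, Nat.sub_mul, mul_comm b a] at *
  omega

-- `s` plays the role of `√(2pq)`, so that `α₊ = s / p` and `α₋ = -(s / q)`.
theorem sub_mul_sub_reflect_eq (p q s μ r t : ℂ) (hp : p ≠ 0) (hq : q ≠ 0)
    (hs : s ^ 2 = 2 * p * q) :
    (μ - ((1 - r) * (s / p) + (1 - t) * (-(s / q))) / 2) *
      (μ - ((1 - (p - r)) * (s / p) + (1 - (q - t)) * (-(s / q))) / 2)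
    = 2 * (μ * (μ - (s / p + -(s / q))) / 2
        - ((r * q - t * p) ^ 2 - (p - q) ^ 2) / (4 * p * q)) := by
  field_simp
  linear_combination 4 * ((q - p) ^ 2 - (r * q - t * p) ^ 2) * hs

end KacTable

theorem stmt_15_general (pp pm : ℕ)
    (hcop : Nat.Coprime pp pm) (μ : ℂ) :
    (∏ i ∈ Finset.Icc 1 (pp - 1), ∏ j ∈ Finset.Icc 1 (pm - 1),
        (μ - ((1 - (i : ℂ)) * ((Real.sqrt (2 * pm / pp) : ℝ) : ℂ)
              + (1 - (j : ℂ)) * ((- Real.sqrt (2 * pp / pm) : ℝ) : ℂ)) / 2))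
      = ∏ rs ∈ (Finset.Icc 1 (pp - 1) ×ˢ Finset.Icc 1 (pm - 1)).filter
            (fun rs : ℕ × ℕ => rs.1 * pm + rs.2 * pp < pp * pm),
          2 * (μ * (μ - (((Real.sqrt (2 * pm / pp) : ℝ) : ℂ)
                        + ((- Real.sqrt (2 * pp / pm) : ℝ) : ℂ))) / 2
            - ((((rs.1 : ℂ) * pm - (rs.2 : ℂ) * pp) ^ 2 - ((pp : ℂ) - pm) ^ 2)
                / (4 * pp * pm))) := by
  rw [← prod_product', prod_eq_prod_filter_mul_comp _
    (fun rs ↦ rs.1 * pm + rs.2 * pp < pp * pm) (fun rs ↦ (pp - rs.1, pm - rs.2)) _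
    (fun _ ↦ KacTable.reflect_mem) (fun _ ↦ KacTable.reflect_reflect)
    (fun _ ↦ KacTable.reflect_lt_iff hcop)]
  refine prod_congr rfl fun x hx ↦ ?_
  simp only [mem_filter, mem_product, mem_Icc] at hx
  have hpp : (0 : ℝ) < pp := Nat.cast_pos.2 (by omega)
  have hpm : (0 : ℝ) < pm := Nat.cast_pos.2 (by omega)
  set s := √(2 * (pp : ℝ) * pm)
  have hαplus : √(2 * (pm : ℝ) / pp) = s / pp := by
    rw [Real.sqrt_div_eq_sqrt_mul_div hpp, ← mul_assoc, mul_comm (pp : ℝ) 2]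
  have hαminus : √(2 * (pp : ℝ) / pm) = s / pm := by
    rw [Real.sqrt_div_eq_sqrt_mul_div hpm, ← mul_assoc, mul_comm (pm : ℝ) 2, mul_right_comm]
  have hs : s ^ 2 = 2 * pp * pm := Real.sq_sqrt (by positivity)
  rw [hαplus, hαminus]
  push_cast [Nat.cast_sub (by omega : x.1 ≤ pp), Nat.cast_sub (by omega : x.2 ≤ pm)]
  exact KacTable.sub_mul_sub_reflect_eq _ _ _ μ _ _ (by exact_mod_cast hpp.ne')
    (by exact_mod_cast hpm.ne') (by exact_mod_cast hs)

/-- For coprime `p₊, p₋ ≥ 2` and `μ ∈ ℂ`: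
`∏_{i=1}^{p₊-1} ∏_{j=1}^{p₋-1} (μ - α_{i,j})` equals
`∏_{(r,s)} 2(h(μ) - h_{r,s})`, where `(r,s)` runs over `1 ≤ r ≤ p₊-1`,
`1 ≤ s ≤ p₋-1` with `rp₋ + sp₊ < p₊p₋`; here `α_{r,s} = ((1-r)α₊+(1-s)α₋)/2`
with `α₊ = √(2p₋/p₊)`, `α₋ = -√(2p₊/p₋)`, `h(μ) = μ(μ-(α₊+α₋))/2` and
`h_{r,s} = ((rp₋-sp₊)² - (p₊-p₋)²)/(4p₊p₋)`. -/
theorem stmt_15 (pp pm : ℕ) (hpp : 2 ≤ pp) (hpm : 2 ≤ pm)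
    (hcop : Nat.Coprime pp pm) (μ : ℂ) :
    (∏ i ∈ Finset.Icc 1 (pp - 1), ∏ j ∈ Finset.Icc 1 (pm - 1),
        (μ - ((1 - (i : ℂ)) * ((Real.sqrt (2 * pm / pp) : ℝ) : ℂ)
              + (1 - (j : ℂ)) * ((- Real.sqrt (2 * pp / pm) : ℝ) : ℂ)) / 2))
      = ∏ rs ∈ (Finset.Icc 1 (pp - 1) ×ˢ Finset.Icc 1 (pm - 1)).filter
            (fun rs : ℕ × ℕ => rs.1 * pm + rs.2 * pp < pp * pm),
          2 * (μ * (μ - (((Real.sqrt (2 * pm / pp) : ℝ) : ℂ)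
                        + ((- Real.sqrt (2 * pp / pm) : ℝ) : ℂ))) / 2
            - ((((rs.1 : ℂ) * pm - (rs.2 : ℂ) * pp) ^ 2 - ((pp : ℂ) - pm) ^ 2)
                / (4 * pp * pm))) :=
  stmt_15_general pp pm hcop μ
end

section
/- For coprime p₊, p₋ ≥ 2 and integers 1 ≤ r ≤ p₊-1, 1 ≤ s ≤ p₋-1, neither h_{r,s} + rs nor h_{r,s} + (p₊-r)(p₋-s) is of the form h_{r',s'} for any 1 ≤ r' ≤ p₊-1, 1 ≤ s' ≤ p₋-1. -/
lemma key_16 (pp pm : ℤ) (hpp : 2 ≤ pp) (hpm : 2 ≤ pm)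
    (hcop : IsCoprime pp pm) (a b r' s' : ℤ)
    (ha1 : 1 ≤ a) (ha2 : a ≤ pp - 1) (hb1 : 1 ≤ b) (hb2 : b ≤ pm - 1)
    (hr1 : 1 ≤ r') (hr2 : r' ≤ pp - 1) (hs1 : 1 ≤ s') (hs2 : s' ≤ pm - 1) :
    (a * pm + b * pp) ^ 2 ≠ (r' * pm - s' * pp) ^ 2 := by
  intro h
  have h' : a * pm + b * pp = r' * pm - s' * pp ∨
      a * pm + b * pp = -(r' * pm - s' * pp) := sq_eq_sq_iff_eq_or_eq_neg.mp h
  rcases h' with h' | h'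
  · -- (a - r') * pm = -(b + s') * pp
    have hd : pp ∣ (a - r') * pm := ⟨-(b + s'), by linarith [h']; ⟩
    have hd2 : pp ∣ (a - r') := hcop.dvd_of_dvd_mul_right hd
    have : a - r' = 0 := by
      rcases hd2 with ⟨k, hk⟩
      rcases lt_trichotomy k 0 with hk0 | hk0 | hk0
      · nlinarith
      · simp [hk0] at hk; omega
      · nlinarith
    have : (b + s') * pp = 0 := by nlinarith [h']
    have hpp0 : pp ≠ 0 := by omega
    have : b + s' = 0 := by
      rcases mul_eq_zero.mp this with h | h
      · exact h
      · omega
    omega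
  · -- (a + r') * pm = (s' - b) * pp
    have hd : pp ∣ (a + r') * pm := ⟨s' - b, by nlinarith [h']⟩
    have hd2 : pp ∣ (a + r') := hcop.dvd_of_dvd_mul_right hd
    have heq : a + r' = pp := by
      rcases hd2 with ⟨k, hk⟩
      rcases lt_trichotomy k 1 with hk0 | hk0 | hk0
      · nlinarith
      · nlinarith
      · nlinarith
    have : pp * pm = (s' - b) * pp := by nlinarith [h']
    have : pm = s' - b := by
      have hpp0 : pp ≠ 0 := by omega
      have := mul_right_cancel₀ hpp0 (by linarith [this] : pm * pp = (s' - b) * pp)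
      exact this
    omega

/-- For coprime `p₊, p₋ ≥ 2` and `1 ≤ r ≤ p₊-1`, `1 ≤ s ≤ p₋-1`, neither
`h_{r,s} + rs` nor `h_{r,s} + (p₊-r)(p₋-s)` equals any `h_{r',s'}` with
`1 ≤ r' ≤ p₊-1`, `1 ≤ s' ≤ p₋-1`, where
`h_{r,s} = ((rp₋-sp₊)² - (p₊-p₋)²)/(4p₊p₋)`. -/
theorem stmt_16 (pp pm : ℤ) (hpp : 2 ≤ pp) (hpm : 2 ≤ pm)
    (hcop : IsCoprime pp pm) (r s : ℤ)
    (hr1 : 1 ≤ r) (hr2 : r ≤ pp - 1) (hs1 : 1 ≤ s) (hs2 : s ≤ pm - 1) :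
    ∀ r' s' : ℤ, 1 ≤ r' → r' ≤ pp - 1 → 1 ≤ s' → s' ≤ pm - 1 →
      ((((r * pm - s * pp : ℤ) : ℚ) ^ 2 - ((pp - pm : ℤ) : ℚ) ^ 2) / (4 * pp * pm)
          + ((r * s : ℤ) : ℚ)
        ≠ (((r' * pm - s' * pp : ℤ) : ℚ) ^ 2 - ((pp - pm : ℤ) : ℚ) ^ 2) / (4 * pp * pm)) ∧
      ((((r * pm - s * pp : ℤ) : ℚ) ^ 2 - ((pp - pm : ℤ) : ℚ) ^ 2) / (4 * pp * pm)
          + (((pp - r) * (pm - s) : ℤ) : ℚ)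
        ≠ (((r' * pm - s' * pp : ℤ) : ℚ) ^ 2 - ((pp - pm : ℤ) : ℚ) ^ 2) / (4 * pp * pm)) := by
  intro r' s' hr1' hr2' hs1' hs2'
  have hppQ : ((pp : ℚ)) ≠ 0 := by positivity
  have hpmQ : ((pm : ℚ)) ≠ 0 := by positivity
  constructor
  · intro h
    apply key_16 pp pm hpp hpm hcop r s r' s' hr1 hr2 hs1 hs2 hr1' hr2' hs1' hs2'
    have h2 : ((r * pm - s * pp : ℤ) : ℚ) ^ 2 + 4 * pp * pm * (r * s)
        = ((r' * pm - s' * pp : ℤ) : ℚ) ^ 2 := by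
      field_simp at h
      push_cast at h ⊢
      linarith
    have h3 : ((r * pm + s * pp : ℤ) : ℚ) ^ 2 = ((r' * pm - s' * pp : ℤ) : ℚ) ^ 2 := by
      push_cast at h2 ⊢
      nlinarith [h2]
    exact_mod_cast h3
  · intro h
    apply key_16 pp pm hpp hpm hcop (pp - r) (pm - s) r' s' (by omega) (by omega)
      (by omega) (by omega) hr1' hr2' hs1' hs2'
    have h2 : ((r * pm - s * pp : ℤ) : ℚ) ^ 2 + 4 * pp * pm * ((pp - r) * (pm - s))
        = ((r' * pm - s' * pp : ℤ) : ℚ) ^ 2 := by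
      field_simp at h
      push_cast at h ⊢
      linarith
    have h3 : (((pp - r) * pm + (pm - s) * pp : ℤ) : ℚ) ^ 2
        = ((r' * pm - s' * pp : ℤ) : ℚ) ^ 2 := by
      push_cast at h2 ⊢
      nlinarith [h2]
    exact_mod_cast h3
end
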